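/- The quasi-homomorphism Δ on a free group F with basis X satisfies Δ(uw) ≤ Δ(u) + Δ(w) + 6 for all u, w ∈ F. -/

import Mathlib

/-!
Write the reduced words as `u = p s⁻¹` and `w = s q` with `p q` the reduced word of `u w`.
`Δ` is the sign variation of the sequence of syllable lengths, and concatenating two words
changes it by at most `2`: either the two syllable sequences are juxtaposed, which adds one
junction sign, or the syllables meeting at the junction merge into a longer one, which can
only raise the sign on its left and only lower the sign on its right. Since reversing a word
reverses its syllable sequence, `Δ(s⁻¹) = -Δ(s)`; hence `Δ(u) ≥ Δ(p) - Δ(s) - 2`,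
`Δ(w) ≥ Δ(s) + Δ(q) - 2` and `Δ(u w) ≤ Δ(p) + Δ(q) + 2`, and adding these gives the bound.
-/

/-- The list of syllable lengths (exponent magnitudes) of the reduced word of `w`. -/
def syllableLengths {X : Type*} [DecidableEq X] (w : FreeGroup X) : List ℕ :=
  (w.toWord.splitBy (fun a b => a.1 == b.1)).map List.length

/-- The quasi-homomorphism `Δ`: the sum, over consecutive pairs of syllables
`a^{±k}`, `b^{±l}`, of `sign (l - k)`. -/
def delta {X : Type*} [DecidableEq X] (w : FreeGroup X) : ℤ :=
  ((syllableLengths w).zip (syllableLengths w).tail).foldl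
    (fun acc p => acc + Int.sign ((p.2 : ℤ) - (p.1 : ℤ))) 0

theorem Int.abs_sign_le_one (z : ℤ) : |z.sign| ≤ 1 := by
  rcases z.sign_trichotomy with h | h | h <;> simp [h]

theorem Int.sign_sub_sign_mem_Icc {x y : ℤ} (h : x ≤ y) : y.sign - x.sign ∈ Set.Icc 0 2 := by
  rcases lt_trichotomy x 0 with hx | rfl | hx <;> rcases lt_trichotomy y 0 with hy | rfl | hy <;>
    simp [Int.sign_eq_neg_one_of_neg, Int.sign_eq_one_of_pos, *] <;> omega

namespace List

variable {α β : Type*} {r : α → α → Bool}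

theorem splitBy_reverse (hr : ∀ a b, r a b = r b a) (l : List α) :
    l.reverse.splitBy r = ((l.splitBy r).map reverse).reverse := by
  rw [splitBy_eq_iff]
  refine ⟨by rw [← reverse_flatten, flatten_splitBy], by simp, ?_, ?_⟩
  · simp only [mem_reverse, mem_map]
    rintro _ ⟨g, hg, rfl⟩
    rw [isChain_reverse]
    exact (isChain_of_mem_splitBy hg).imp fun a b h => by rwa [hr]
  · rw [isChain_reverse, isChain_map]
    refine (isChain_getLast_head_splitBy r l).imp ?_
    rintro a b ⟨ha, hb, h⟩
    exact ⟨by simpa using hb, by simpa using ha, by simpa [hr] using h⟩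

theorem splitBy_map (f : β → α) {r' : β → β → Bool} (hf : ∀ a b, r (f a) (f b) = r' a b)
    (l : List β) : (l.map f).splitBy r = (l.splitBy r').map (map f) := by
  rw [splitBy_eq_iff]
  refine ⟨by rw [← map_flatten, flatten_splitBy], by simp, ?_, ?_⟩
  · simp only [mem_map]
    rintro _ ⟨g, hg, rfl⟩
    rw [isChain_map]
    exact (isChain_of_mem_splitBy hg).imp fun a b h => by rwa [hf]
  · rw [isChain_map]
    refine (isChain_getLast_head_splitBy r' l).imp ?_
    rintro a b ⟨ha, hb, h⟩
    exact ⟨by simpa using ha, by simpa using hb, by simpa [hf] using h⟩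

theorem splitBy_append_of_rel {A B g₁ g₂ : List α} {GA GB : List (List α)}
    (hA : A.splitBy r = GA ++ [g₁]) (hB : B.splitBy r = g₂ :: GB)
    (h : ∀ x ∈ A.getLast?, ∀ y ∈ B.head?, r x y = true) :
    (A ++ B).splitBy r = GA ++ (g₁ ++ g₂) :: GB := by
  rw [splitBy_eq_iff] at hA hB ⊢
  obtain ⟨rfl, hnA, hcA, hRA⟩ := hA
  obtain ⟨rfl, hnB, hcB, hRB⟩ := hB
  have hg₁ : g₁ ≠ [] := fun e => hnA (by simp [e])
  have hg₂ : g₂ ≠ [] := fun e => hnB (by simp [e])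
  refine ⟨by simp, ?_, ?_, ?_⟩
  · simp only [mem_append, mem_cons, not_or] at hnA hnB ⊢
    exact ⟨hnA.1, fun e => hg₁ (append_eq_nil_iff.1 e.symm).1, hnB.2⟩
  · simp only [mem_append, mem_cons]
    rintro m (hm | rfl | hm)
    · exact hcA m (by simp [hm])
    · refine (hcA g₁ (by simp)).append (hcB g₂ (by simp)) fun x hx y hy => h x ?_ y ?_
      · simpa [getLast?_append_of_ne_nil _ hg₁] using hx
      · simpa [head?_append_of_ne_nil _ hg₂] using hy
    · exact hcB m (by simp [hm])
  · rw [isChain_append] at hRA ⊢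
    rw [isChain_cons] at hRB ⊢
    refine ⟨hRA.1, ⟨fun b hb => ?_, hRB.2⟩, fun a ha b hb => ?_⟩
    · obtain ⟨_, hb', hr⟩ := hRB.1 b hb
      exact ⟨by simp [hg₁], hb', by simpa [getLast_append_right hg₂] using hr⟩
    · simp only [head?_cons, Option.mem_def, Option.some.injEq] at hb
      subst hb
      obtain ⟨ha', _, hr⟩ := hRA.2.2 a ha g₁ (by simp)
      exact ⟨ha', by simp [hg₁], by simpa [head_append_of_ne_nil hg₁] using hr⟩

end List

def signVariation : List ℕ → ℤ
  | a :: b :: l => ((b : ℤ) - a).sign + signVariation (b :: l)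
  | _ => 0

@[simp] theorem signVariation_nil : signVariation [] = 0 := rfl

@[simp] theorem signVariation_singleton (a : ℕ) : signVariation [a] = 0 := rfl

@[simp] theorem signVariation_cons_cons (a b : ℕ) (l : List ℕ) :
    signVariation (a :: b :: l) = ((b : ℤ) - a).sign + signVariation (b :: l) := rfl

theorem foldl_sign_zip_tail_eq_add_signVariation : ∀ (l : List ℕ) (c : ℤ),
    (l.zip l.tail).foldl (fun acc p => acc + Int.sign ((p.2 : ℤ) - (p.1 : ℤ))) c
      = c + signVariation l
  | [], c | [_], c => by simp
  | a :: b :: l, c => by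
    rw [show (a :: b :: l).zip (a :: b :: l).tail = (a, b) :: (b :: l).zip (b :: l).tail from rfl,
      List.foldl_cons, foldl_sign_zip_tail_eq_add_signVariation, signVariation_cons_cons, add_assoc]

theorem signVariation_append_cons : ∀ (l : List ℕ) (a : ℕ) (m : List ℕ),
    signVariation (l ++ a :: m) = signVariation (l ++ [a]) + signVariation (a :: m)
  | [], _, _ => by simp
  | [_], _, _ => by simp
  | x :: y :: l, a, m => by
    have ih := signVariation_append_cons (y :: l) a m
    simp only [List.cons_append, signVariation_cons_cons] at ih ⊢
    rw [ih, add_assoc]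

theorem signVariation_reverse : ∀ l : List ℕ, signVariation l.reverse = -signVariation l
  | [] | [_] => by simp
  | a :: b :: l => by
    rw [List.reverse_cons, List.reverse_cons, List.append_assoc, List.singleton_append,
      signVariation_append_cons, ← List.reverse_cons, signVariation_reverse (b :: l)]
    simp [← Int.sign_neg]

theorem signVariation_cons_sub_mem_Icc {a c : ℕ} (h : a ≤ c) (m : List ℕ) :
    signVariation (a :: m) - signVariation (c :: m) ∈ Set.Icc 0 2 := by
  cases m with
  | nil => simp
  | cons b m => simpa using Int.sign_sub_sign_mem_Icc (show (b : ℤ) - c ≤ b - a by omega)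

theorem signVariation_append_singleton_sub_mem_Icc {a c : ℕ} (h : a ≤ c) (l : List ℕ) :
    signVariation (l ++ [c]) - signVariation (l ++ [a]) ∈ Set.Icc 0 2 := by
  have snoc_eq (x : ℕ) : signVariation (l ++ [x]) = -signVariation (x :: l.reverse) := by
    simpa using signVariation_reverse (x :: l.reverse)
  rw [snoc_eq, snoc_eq, neg_sub_neg]
  exact signVariation_cons_sub_mem_Icc h l.reverse

theorem abs_signVariation_append_cons_cons_sub_le (l m : List ℕ) (a b : ℕ) :
    |signVariation (l ++ a :: b :: m) - signVariation (l ++ [a]) - signVariation (b :: m)|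
      ≤ 1 := by
  rw [signVariation_append_cons, signVariation_cons_cons]
  simpa using Int.abs_sign_le_one _

theorem abs_signVariation_merge_sub_le (l m : List ℕ) (a b : ℕ) :
    |signVariation (l ++ (a + b) :: m) - signVariation (l ++ [a]) - signVariation (b :: m)|
      ≤ 2 := by
  have hl := signVariation_append_singleton_sub_mem_Icc (Nat.le_add_right a b) l
  have hm := signVariation_cons_sub_mem_Icc (Nat.le_add_left b a) m
  rw [signVariation_append_cons, abs_le]
  constructor <;> linarith [hl.1, hl.2, hm.1, hm.2]

def runLengths {α : Type*} (r : α → α → Bool) (l : List α) : List ℕ :=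
  (l.splitBy r).map List.length

theorem abs_signVariation_runLengths_append_sub_le {α : Type*} (r : α → α → Bool)
    (A B : List α) :
    |signVariation (runLengths r (A ++ B)) - signVariation (runLengths r A)
      - signVariation (runLengths r B)| ≤ 2 := by
  rcases eq_or_ne A [] with rfl | hA
  · simp [runLengths]
  rcases eq_or_ne B [] with rfl | hB
  · simp [runLengths]
  obtain ⟨GA, g₁, hGA⟩ :=
    (A.splitBy r).eq_nil_or_concat'.resolve_left (List.splitBy_ne_nil.2 hA)
  obtain ⟨g₂, GB, hGB⟩ := List.exists_cons_of_ne_nil (List.splitBy_ne_nil (r := r) |>.2 hB)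
  have hlast : ∀ x ∈ A.getLast?, x = A.getLast hA := by simp [List.getLast?_eq_some_getLast hA]
  have hhead : ∀ y ∈ B.head?, y = B.head hB := by simp [List.head?_eq_some_head hB]
  cases hr : r (A.getLast hA) (B.head hB)
  · have hAB := List.splitBy_append (r := r) fun x hx y hy => by rwa [hlast x hx, hhead y hy]
    simp only [runLengths, hAB, hGA, hGB, List.map_append, List.map_cons, List.map_nil,
      List.append_assoc, List.singleton_append]
    exact (abs_signVariation_append_cons_cons_sub_le _ _ _ _).trans (by norm_num)
  · have hAB := List.splitBy_append_of_rel hGA hGB fun x hx y hy => by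
      rwa [hlast x hx, hhead y hy]
    simp only [runLengths, hAB, hGA, hGB, List.map_append, List.map_cons, List.map_nil,
      List.length_append]
    exact abs_signVariation_merge_sub_le _ _ _ _

namespace FreeGroup

variable {X : Type*} [DecidableEq X]

def sameBase (a b : X × Bool) : Bool := a.1 == b.1

theorem runLengths_sameBase_invRev (s : List (X × Bool)) :
    runLengths sameBase (invRev s) = (runLengths sameBase s).reverse := by
  rw [runLengths, invRev, List.splitBy_reverse (fun a b => by simp [sameBase, eq_comm]),
    List.splitBy_map (fun g : X × Bool => (g.1, !g.2)) (r' := sameBase) fun _ _ => rfl]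
  simp [runLengths, List.map_reverse]

theorem exists_reduce_append_eq {L₁ L₂ : List (X × Bool)} (h₁ : IsReduced L₁)
    (h₂ : IsReduced L₂) :
    ∃ p s q, L₁ = p ++ invRev s ∧ L₂ = s ++ q ∧ reduce (L₁ ++ L₂) = p ++ q := by
  induction L₂ generalizing L₁ with
  | nil => exact ⟨L₁, [], [], by simp [invRev], rfl, by simpa using h₁.reduce_eq⟩
  | cons y t ih =>
    rcases L₁.eq_nil_or_concat' with rfl | ⟨L, x, rfl⟩
    · exact ⟨[], [], y :: t, by simp [invRev], rfl, by simpa using h₂.reduce_eq⟩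
    by_cases hxy : x = (y.1, !y.2)
    · obtain ⟨p, s, q, hL, ht, hred⟩ :=
        ih (h₁.infix (List.prefix_append L [x]).isInfix)
          (h₂.infix (List.suffix_cons y t).isInfix)
      refine ⟨p, y :: s, q, by simp [hL, hxy, invRev], by simp [ht], ?_⟩
      rw [← hred, List.append_assoc, List.singleton_append, hxy]
      exact reduce.Step.eq Red.Step.not_rev
    · refine ⟨L ++ [x], [], y :: t, by simp [invRev], rfl, IsReduced.reduce_eq ?_⟩
      refine List.IsChain.append h₁ h₂ fun a ha b hb => ?_
      simp only [List.getLast?_concat, Option.mem_def, Option.some.injEq, List.head?_cons] at ha hb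
      subst ha hb
      intro h
      by_contra h'
      exact hxy (Prod.ext h (Bool.eq_not.mpr h'))

theorem delta_eq_signVariation (w : FreeGroup X) :
    delta w = signVariation (runLengths sameBase w.toWord) := by
  rw [delta, foldl_sign_zip_tail_eq_add_signVariation, zero_add]
  rfl

end FreeGroup

open FreeGroup in
/-- `Δ` is a quasi-homomorphism. -/
theorem delta_quasi_hom {X : Type*} [DecidableEq X] (u w : FreeGroup X) :
    delta (u * w) ≤ delta u + delta w + 6 := by
  obtain ⟨p, s, q, hu, hw, huw⟩ := exists_reduce_append_eq (isReduced_toWord (x := u))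
    (isReduced_toWord (x := w))
  rw [← toWord_mul] at huw
  simp only [delta_eq_signVariation, huw, hu, hw]
  have hpq := abs_signVariation_runLengths_append_sub_le sameBase p q
  have hps := abs_signVariation_runLengths_append_sub_le sameBase p (invRev s)
  have hsq := abs_signVariation_runLengths_append_sub_le sameBase s q
  rw [runLengths_sameBase_invRev, signVariation_reverse, abs_le] at hps
  rw [abs_le] at hpq hsq
  linarith [hpq.2, hps.1, hsq.1]
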